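/- Let X be a topological space, n ≥ 1, and let E₁, …, E_n ⊆ X. The smallest family of subsets of X containing E₁, …, E_n and closed under topological closure and set complement has at most 14·n elements. -/

import Mathlib

/-!
Every set obtained from a single set `s` by closures and complements is one of Kuratowski's
fourteen words in `s`: closure is idempotent, complement is an involution, and
`k c k c k c k = k c k` (the identity `closure (interior (closure (interior t))) = closure
(interior t)` in disguise). The family generated by `E₁, …, E_n` is therefore covered by the
`14 * n` words in the `E j`.
-/

/-- The family of subsets of a topological space `X` generated from the sets `E 0, …, E (n-1)`
by successive applications of topological closure and set complement: the smallest collection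
of subsets of `X` containing all the `E j` and closed under these operations. -/
inductive kcGen {X : Type*} [TopologicalSpace X] {n : ℕ} (E : Fin n → Set X) : Set X → Prop
  | base (j : Fin n) : kcGen E (E j)
  | closure {A : Set X} : kcGen E A → kcGen E (closure A)
  | compl {A : Set X} : kcGen E A → kcGen E Aᶜ

namespace Kuratowski

variable {X : Type*} [TopologicalSpace X]

theorem closure_compl_closure_compl_closure_compl_closure (s : Set X) :
    closure (closure (closure (closure s)ᶜ)ᶜ)ᶜ = closure (closure s)ᶜ := by
  simp only [← interior_compl, ← closure_compl, compl_compl]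
  exact closure_interior_idem

/-- Kuratowski's fourteen words in `s`. -/
def word (s : Set X) : Fin 14 → Set X :=
  ![s, sᶜ, closure s, closure sᶜ, (closure s)ᶜ, (closure sᶜ)ᶜ,
    closure (closure s)ᶜ, closure (closure sᶜ)ᶜ,
    (closure (closure s)ᶜ)ᶜ, (closure (closure sᶜ)ᶜ)ᶜ,
    closure (closure (closure s)ᶜ)ᶜ, closure (closure (closure sᶜ)ᶜ)ᶜ,
    (closure (closure (closure s)ᶜ)ᶜ)ᶜ, (closure (closure (closure sᶜ)ᶜ)ᶜ)ᶜ]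

/-- The action of closure on the indices of `word s`. -/
def closureIdx : Fin 14 → Fin 14 := ![2, 3, 2, 3, 6, 7, 6, 7, 10, 11, 10, 11, 6, 7]

/-- The action of complement on the indices of `word s`. -/
def complIdx : Fin 14 → Fin 14 := ![1, 0, 4, 5, 2, 3, 8, 9, 6, 7, 12, 13, 10, 11]

theorem closure_word (s : Set X) (i : Fin 14) :
    closure (word s i) = word s (closureIdx i) := by
  fin_cases i <;>
    simp [word, closureIdx, -closure_compl, closure_compl_closure_compl_closure_compl_closure]

theorem compl_word (s : Set X) (i : Fin 14) : (word s i)ᶜ = word s (complIdx i) := by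
  fin_cases i <;> simp [word, complIdx]

end Kuratowski

open Kuratowski in
theorem kcGen.exists_eq_word {X : Type*} [TopologicalSpace X] {n : ℕ} {E : Fin n → Set X}
    {A : Set X} (h : kcGen E A) : ∃ j i, A = word (E j) i := by
  induction h with
  | base j => exact ⟨j, 0, rfl⟩
  | closure _ ih =>
    obtain ⟨j, i, rfl⟩ := ih
    exact ⟨j, closureIdx i, closure_word _ i⟩
  | compl _ ih =>
    obtain ⟨j, i, rfl⟩ := ih
    exact ⟨j, complIdx i, compl_word _ i⟩

theorem closure_compl_generated_card_general {X : Type*} [TopologicalSpace X] {n : ℕ}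
    (E : Fin n → Set X) :
    {A : Set X | kcGen E A}.encard ≤ 14 * n := by
  have hcover : {A : Set X | kcGen E A} ⊆
      Set.range (fun p : Fin n × Fin 14 => Kuratowski.word (E p.1) p.2) := by
    rintro A hA
    obtain ⟨j, i, rfl⟩ := hA.exists_eq_word
    exact ⟨(j, i), rfl⟩
  calc {A : Set X | kcGen E A}.encard
      ≤ (Set.range (fun p : Fin n × Fin 14 => Kuratowski.word (E p.1) p.2)).encard :=
        Set.encard_le_encard hcover
    _ ≤ (Set.univ : Set (Fin n × Fin 14)).encard := by
        rw [← Set.image_univ]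
        exact Set.encard_image_le _ _
    _ = 14 * n := by
        simp [Set.encard_univ, mul_comm]

/-- For `n ≥ 1` subsets `E₁, …, E_n` of a topological space `X`, the smallest family of
subsets of `X` containing the `E j` and closed under closure and complement has at most
`14 * n` elements. -/
theorem closure_compl_generated_card {X : Type*} [TopologicalSpace X] {n : ℕ} (hn : 1 ≤ n)
    (E : Fin n → Set X) :
    {A : Set X | kcGen E A}.encard ≤ 14 * n :=
  closure_compl_generated_card_general E
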